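/- arXiv:1112.1124 — 7 statements merged into one kernel-verified Lean document; each statement's English description precedes it below -/
import Mathlib

section
/- Let S be a finite set of n ≥ d+1 points in ℝ^d. Then the convex hull of S can be partitioned into at most ⌈(n-1)/d⌉ closed convex bodies whose interiors are pairwise disjoint and each of whose interiors contains no point of S. -/
/-!
Let `P` be the points of `S` interior to `C = conv S`. A hyperplane supporting `P` that passes
through `d` of its points (or through all of them) cuts from `C` a tile whose interior misses `P`,
and the rest of `C` contains at least `d` fewer points of `P`; iterating gives a partition of `C`
into `⌈|P| / d⌉ + 1` tiles. Points of `S` outside the interior of `C` are automatically outside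
the interior of every tile, and when `C` is full-dimensional at least `d + 1` of them (the
vertices of `C`) exist, whence `⌈(n - 1) / d⌉`. Such a hyperplane is obtained from a supporting
hyperplane whose contact set is maximal: if it met fewer than `d` points, it could be rotated
about the affine span of its contact set, keeping `P` on one side, until it meets a further point.
-/

open Module Set Finset
open scoped RealInnerProductSpace

/-- A Steiner convex partition of a finite point set `S ⊆ ℝ^d`:
a finite collection of compact convex tiles with pairwise disjoint interiors
whose union is `conv(S)`, none of whose interiors contains a point of `S`. -/
def IsSteinerConvexPartition (d : ℕ) (S : Finset (EuclideanSpace ℝ (Fin d)))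
    (𝒯 : Finset (Set (EuclideanSpace ℝ (Fin d)))) : Prop :=
  (∀ t ∈ 𝒯, Convex ℝ t ∧ IsCompact t ∧ ∀ p ∈ S, p ∉ interior t) ∧
  (⋃ t ∈ 𝒯, t) = convexHull ℝ (S : Set (EuclideanSpace ℝ (Fin d))) ∧
  ((𝒯 : Set (Set (EuclideanSpace ℝ (Fin d)))).Pairwise
    fun t₁ t₂ => interior t₁ ∩ interior t₂ = ∅)

theorem Nat.ceil_div_add_one_le {K : Type*} [Field K] [LinearOrder K] [IsStrictOrderedRing K]
    [FloorSemiring K] {x y d : K} (hd : 0 < d) (hx : 0 ≤ x) (h : x + d ≤ y) :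
    ⌈x / d⌉₊ + 1 ≤ ⌈y / d⌉₊ := by
  rw [← Nat.ceil_add_one (div_nonneg hx hd.le)]
  refine Nat.ceil_mono ?_
  rwa [le_div_iff₀ hd, add_mul, div_mul_cancel₀ _ hd.ne', one_mul]

theorem Finset.exists_tilt_enlarging_filter_eq {α : Type*} (P : Finset α) {f g : α → ℝ} {c e : ℝ}
    (hf : ∀ p ∈ P, f p ≤ c) (hg : ∀ p ∈ P, f p = c → g p = e) (hq : ∃ q ∈ P, e < g q) :
    ∃ t : ℝ, (∀ p ∈ P, f p + t * g p ≤ c + t * e) ∧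
      {p ∈ P | f p = c} ⊂ {p ∈ P | f p + t * g p = c + t * e} := by
  set Q := {p ∈ P | e < g p}
  have hQ : Q.Nonempty := by simpa [Q, Finset.Nonempty] using hq
  have hQc : ∀ p ∈ Q, f p < c := fun p hp => by
    obtain ⟨hpP, hpe⟩ := mem_filter.1 hp
    exact (hf p hpP).lt_of_ne fun h => hpe.ne' (hg p hpP h)
  -- the steepest tilt that keeps every point of `Q` below the tilted level
  obtain ⟨q, hq, hqmin⟩ := Q.exists_min_image (fun p => (c - f p) / (g p - e)) hQ
  obtain ⟨hqP, hqe⟩ := mem_filter.1 hq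
  set t := (c - f q) / (g q - e)
  have ht : 0 < t := div_pos (sub_pos.2 (hQc q hq)) (sub_pos.2 hqe)
  refine ⟨t, fun p hp => ?_, Finset.ssubset_iff_subset_ne.2 ⟨fun p hp => ?_, fun h => ?_⟩⟩
  · rcases le_or_gt (g p) e with hpe | hpe
    · nlinarith [hf p hp]
    · have := hqmin p (mem_filter.2 ⟨hp, hpe⟩)
      rw [le_div_iff₀ (sub_pos.2 hpe)] at this
      linarith
  · obtain ⟨hpP, hpc⟩ := mem_filter.1 hp
    simp [hpP, hpc, hg p hpP hpc]
  · have : q ∈ {p ∈ P | f p = c} := by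
      rw [h, mem_filter]
      have : t * (g q - e) = c - f q := div_mul_cancel₀ _ (sub_pos.2 hqe).ne'
      exact ⟨hqP, by linarith⟩
    exact hqe.ne' (hg q hqP (mem_filter.1 this).2)

theorem Finset.finrank_vectorSpan_add_one_le_card {k V P : Type*} [DivisionRing k]
    [AddCommGroup V] [Module k V] [AddTorsor V P] (A : Finset P) (hA : A.Nonempty) :
    finrank k (vectorSpan k (A : Set P)) + 1 ≤ #A := by
  have := hA.coe_sort
  have h := finrank_vectorSpan_range_add_one_le k ((↑) : A → P)
  rwa [Subtype.range_coe_subtype, Fintype.card_coe] at h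

section ConvexPartition

variable {E : Type*} [AddCommGroup E] [Module ℝ E] [TopologicalSpace E]

def IsConvexPartition (C : Set E) (P : Finset E) (𝒯 : Finset (Set E)) : Prop :=
  (∀ t ∈ 𝒯, Convex ℝ t ∧ IsCompact t ∧ ∀ p ∈ P, p ∉ interior t) ∧
  (⋃ t ∈ 𝒯, t) = C ∧
  (𝒯 : Set (Set E)).Pairwise fun t₁ t₂ => interior t₁ ∩ interior t₂ = ∅

theorem IsConvexPartition.of_filter_mem_interior {C : Set E} {P : Finset E}
    {𝒯 : Finset (Set E)} [DecidablePred (· ∈ interior C)]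
    (h : IsConvexPartition C {p ∈ P | p ∈ interior C} 𝒯) :
    IsConvexPartition C P 𝒯 := by
  obtain ⟨htiles, hunion, hdisj⟩ := h
  refine ⟨fun t ht => ⟨(htiles t ht).1, (htiles t ht).2.1, fun p hp hpt => ?_⟩, hunion, hdisj⟩
  have htC : t ⊆ C := hunion ▸ subset_biUnion_of_mem (u := id) ht
  exact (htiles t ht).2.2 p (mem_filter.2 ⟨hp, interior_mono htC hpt⟩) hpt

end ConvexPartition

section InnerProductSpace

variable {E : Type*} [NormedAddCommGroup E] [InnerProductSpace ℝ E]

theorem interior_setOf_inner_le {v : E} (hv : v ≠ 0) (c : ℝ) :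
    interior {x : E | ⟪v, x⟫ ≤ c} = {x | ⟪v, x⟫ < c} := by
  have hne : innerSL ℝ v ≠ 0 := by rwa [← norm_ne_zero_iff, innerSL_apply_norm, norm_ne_zero_iff]
  exact (((innerSL ℝ v).isOpenMap_of_ne_zero hne).preimage_interior_eq_interior_preimage
    (innerSL ℝ v).continuous (Iic c)).symm.trans (by rw [interior_Iic]; rfl)

theorem interior_setOf_le_inner {v : E} (hv : v ≠ 0) (c : ℝ) :
    interior {x : E | c ≤ ⟪v, x⟫} = {x | c < ⟪v, x⟫} := by
  simpa [inner_neg_left] using interior_setOf_inner_le (neg_ne_zero.2 hv) (-c)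

theorem inner_eq_of_mem_orthogonal_vectorSpan {s : Set E} {w : E}
    (hw : w ∈ (vectorSpan ℝ s)ᗮ) {a b : E} (ha : a ∈ s) (hb : b ∈ s) : ⟪w, a⟫ = ⟪w, b⟫ := by
  have := Submodule.inner_left_of_mem_orthogonal (vsub_mem_vectorSpan ℝ ha hb) hw
  rwa [vsub_eq_sub, inner_sub_right, sub_eq_zero] at this

theorem exists_ne_zero_inner_eq_zero_mem_orthogonal_vectorSpan [FiniteDimensional ℝ E]
    {A : Finset E} (hA : A.Nonempty) (v : E) (hcard : #A < finrank ℝ E) :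
    ∃ w ≠ 0, ⟪v, w⟫ = 0 ∧ w ∈ (vectorSpan ℝ (A : Set E))ᗮ := by
  set K := (ℝ ∙ v) ⊔ vectorSpan ℝ (A : Set E)
  have hK : finrank ℝ K < finrank ℝ E := by
    have h1 : finrank ℝ K ≤ finrank ℝ (ℝ ∙ v) + finrank ℝ (vectorSpan ℝ (A : Set E)) :=
      Submodule.finrank_add_le_finrank_add_finrank _ _
    have h2 : finrank ℝ (ℝ ∙ v) ≤ 1 := by simpa using finrank_span_le_card (R := ℝ) {v}
    have h3 := A.finrank_vectorSpan_add_one_le_card (k := ℝ) hA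
    omega
  obtain ⟨w, hwK, hw0⟩ := Submodule.exists_mem_ne_zero_of_ne_bot
    (mt K.orthogonal_eq_bot_iff.1 fun h => by rw [h, finrank_top] at hK; exact hK.false)
  exact ⟨w, hw0, Submodule.inner_right_of_mem_orthogonal
    (Submodule.mem_sup_left (Submodule.mem_span_singleton_self v)) hwK,
    Submodule.orthogonal_le le_sup_right hwK⟩

theorem exists_supporting_contact_ssuperset [FiniteDimensional ℝ E] {P : Finset E} {v : E}
    {c : ℝ} (hv : v ≠ 0) (hP : ∀ p ∈ P, ⟪v, p⟫ ≤ c) (hA : {p ∈ P | ⟪v, p⟫ = c}.Nonempty)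
    (hAP : {p ∈ P | ⟪v, p⟫ = c} ≠ P) (hcard : #{p ∈ P | ⟪v, p⟫ = c} < finrank ℝ E) :
    ∃ v' ≠ 0, ∃ c', (∀ p ∈ P, ⟪v', p⟫ ≤ c') ∧
      {p ∈ P | ⟪v, p⟫ = c} ⊂ {p ∈ P | ⟪v', p⟫ = c'} := by
  set A := {p ∈ P | ⟪v, p⟫ = c}
  obtain ⟨b, hb⟩ := hA
  -- `w` is a direction of rotation about the affine span of `A`, transversal to `v`
  obtain ⟨w, hw0, hwv, hwA⟩ :=
    exists_ne_zero_inner_eq_zero_mem_orthogonal_vectorSpan ⟨b, hb⟩ v hcard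
  replace hwA : ∀ a ∈ A, ⟪w, a⟫ = ⟪w, b⟫ := fun a ha =>
    inner_eq_of_mem_orthogonal_vectorSpan hwA ha hb
  by_cases hlevel : ∀ p ∈ P, ⟪w, p⟫ = ⟪w, b⟫
  · refine ⟨w, hw0, ⟪w, b⟫, fun p hp => (hlevel p hp).le, ?_⟩
    rw [filter_true_of_mem hlevel]
    exact (filter_subset _ _).ssubset_of_ne hAP
  obtain ⟨q, hqP, hqb⟩ := not_forall₂.1 hlevel
  obtain ⟨u, huv, huA, hu⟩ :
      ∃ u : E, ⟪v, u⟫ = 0 ∧ (∀ a ∈ A, ⟪u, a⟫ = ⟪u, b⟫) ∧ ⟪u, b⟫ < ⟪u, q⟫ := by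
    rcases lt_or_gt_of_ne hqb with h | h
    · exact ⟨-w, by simp [hwv], fun a ha => by simp [hwA a ha], by simpa using h⟩
    · exact ⟨w, hwv, hwA, h⟩
  obtain ⟨t, ht, hss⟩ := P.exists_tilt_enlarging_filter_eq (f := (⟪v, ·⟫)) (g := (⟪u, ·⟫)) hP
    (fun p hp hpc => huA p (mem_filter.2 ⟨hp, hpc⟩)) ⟨q, hqP, hu⟩
  have hinner : ∀ x, ⟪v + t • u, x⟫ = ⟪v, x⟫ + t * ⟪u, x⟫ := fun x => by
    rw [inner_add_left, real_inner_smul_left]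
  refine ⟨v + t • u, fun h => hv ?_, c + t * ⟪u, b⟫, fun p hp => (hinner p).trans_le (ht p hp),
    by simpa only [hinner] using hss⟩
  -- `⟪v, v + t • u⟫ = ‖v‖ ^ 2`
  have := congrArg (⟪v, ·⟫) h
  simpa [inner_add_right, real_inner_smul_right, huv] using this

theorem Finset.exists_supporting_hyperplane_eq_or_finrank_le_card [FiniteDimensional ℝ E]
    [Nontrivial E] (P : Finset E) (hP : P.Nonempty) :
    ∃ v ≠ 0, ∃ c, (∀ p ∈ P, ⟪v, p⟫ ≤ c) ∧
      ({p ∈ P | ⟪v, p⟫ = c} = P ∨ finrank ℝ E ≤ #{p ∈ P | ⟪v, p⟫ = c}) := by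
  classical
  let contacts := P.powerset.filter fun A => A.Nonempty ∧
    ∃ v ≠ 0, ∃ c, (∀ p ∈ P, ⟪v, p⟫ ≤ c) ∧ A = {p ∈ P | ⟪v, p⟫ = c}
  have hcontacts : contacts.Nonempty := by
    obtain ⟨v, hv⟩ := exists_ne (0 : E)
    obtain ⟨b, hb, hmax⟩ := P.exists_max_image (⟪v, ·⟫) hP
    exact ⟨{p ∈ P | ⟪v, p⟫ = ⟪v, b⟫}, mem_filter.2 ⟨mem_powerset.2 (filter_subset _ _),
      ⟨b, mem_filter.2 ⟨hb, rfl⟩⟩, v, hv, ⟪v, b⟫, hmax, rfl⟩⟩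
  obtain ⟨A, hA, hAmax⟩ := contacts.exists_max_image card hcontacts
  obtain ⟨-, hAne, v, hv, c, hvc, rfl⟩ := mem_filter.1 hA
  refine ⟨v, hv, c, hvc, ?_⟩
  by_contra! h
  obtain ⟨v', hv', c', hv'c', hss⟩ :=
    exists_supporting_contact_ssuperset hv hvc hAne h.1 h.2
  have := hAmax _ (mem_filter.2 ⟨mem_powerset.2 (filter_subset _ _), hAne.mono hss.subset,
    v', hv', c', hv'c', rfl⟩)
  exact (card_lt_card hss).not_ge this

theorem IsConvexPartition.insert_inter_setOf_le_inner {C : Set E} {P : Finset E}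
    {𝒯 : Finset (Set E)} {v : E} {c : ℝ} (hv : v ≠ 0) (hC : Convex ℝ C) (hCc : IsCompact C)
    (hP : ∀ p ∈ P, ⟪v, p⟫ ≤ c)
    (h : IsConvexPartition (C ∩ {x | ⟪v, x⟫ ≤ c}) {p ∈ P | ⟪v, p⟫ ≠ c} 𝒯) :
    IsConvexPartition C P (insert (C ∩ {x | c ≤ ⟪v, x⟫}) 𝒯) := by
  obtain ⟨htiles, hunion, hdisj⟩ := h
  have hcap : interior (C ∩ {x | c ≤ ⟪v, x⟫}) ⊆ {x | c < ⟪v, x⟫} :=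
    interior_setOf_le_inner hv c ▸ interior_mono inter_subset_right
  have hbelow : ∀ t ∈ 𝒯, interior t ⊆ {x | ⟪v, x⟫ < c} := fun t ht =>
    interior_setOf_inner_le hv c ▸ interior_mono
      ((hunion ▸ subset_biUnion_of_mem (u := id) ht).trans inter_subset_right)
  refine ⟨fun t ht => ?_, ?_, ?_⟩
  · rcases mem_insert.1 ht with rfl | ht
    · exact ⟨hC.inter ((convex_Ici c).linear_preimage (innerₛₗ ℝ v)),
        hCc.inter_right (isClosed_Ici.preimage (innerSL ℝ v).continuous),
        fun p hp hpt => (hP p hp).not_gt (hcap hpt)⟩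
    · refine ⟨(htiles t ht).1, (htiles t ht).2.1, fun p hp hpt => ?_⟩
      by_cases hpc : ⟪v, p⟫ = c
      · exact (hbelow t ht hpt).ne hpc
      · exact (htiles t ht).2.2 p (mem_filter.2 ⟨hp, hpc⟩) hpt
  · rw [set_biUnion_insert, hunion, ← Set.inter_union_distrib_left]
    exact inter_eq_left.2 fun x _ => le_total c ⟪v, x⟫
  · rw [coe_insert]
    refine hdisj.insert fun t ht _ => ?_
    have : interior (C ∩ {x | c ≤ ⟪v, x⟫}) ∩ interior t = ∅ := eq_empty_of_forall_notMem
      fun x hx => lt_asymm (a := c) (b := ⟪v, x⟫) (hcap hx.1) (hbelow t ht hx.2)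
    exact ⟨this, Set.inter_comm _ _ ▸ this⟩

theorem exists_isConvexPartition_card_le [FiniteDimensional ℝ E] [Nontrivial E] {C : Set E}
    (hC : Convex ℝ C) (hCc : IsCompact C) (P : Finset E) :
    ∃ 𝒯, IsConvexPartition C P 𝒯 ∧ #𝒯 ≤ ⌈(#P : ℚ) / finrank ℝ E⌉₊ + 1 := by
  induction P using Finset.strongInduction generalizing C with
  | H P ih =>
  have hd : (0 : ℚ) < finrank ℝ E := Nat.cast_pos.2 finrank_pos
  rcases P.eq_empty_or_nonempty with rfl | hP
  · refine ⟨{C}, ⟨fun t ht => ?_, by simp, by simp⟩, by simp⟩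
    rw [mem_singleton.1 ht]
    exact ⟨hC, hCc, by simp⟩
  obtain ⟨v, hv, c, hvc, hA⟩ := P.exists_supporting_hyperplane_eq_or_finrank_le_card hP
  have hAne : {p ∈ P | ⟪v, p⟫ = c}.Nonempty := by
    rcases hA with hA | hA
    · rwa [hA]
    · exact card_pos.1 (finrank_pos.trans_le hA)
  obtain ⟨𝒯, h𝒯, hcard⟩ := ih {p ∈ P | ⟪v, p⟫ ≠ c}
    (filter_ssubset.2 (by simpa [Finset.Nonempty] using hAne))
    (hC.inter ((convex_Iic c).linear_preimage (innerₛₗ ℝ v)))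
    (hCc.inter_right (isClosed_Iic.preimage (innerSL ℝ v).continuous))
  refine ⟨_, h𝒯.insert_inter_setOf_le_inner hv hC hCc hvc, (card_insert_le _ _).trans ?_⟩
  have hsplit := card_filter_add_card_filter_not (s := P) (fun p => ⟪v, p⟫ = c)
  suffices ⌈(#{p ∈ P | ⟪v, p⟫ ≠ c} : ℚ) / finrank ℝ E⌉₊ + 1 ≤ ⌈(#P : ℚ) / finrank ℝ E⌉₊ by
    omega
  rcases hA with hA | hA
  · have : {p ∈ P | ⟪v, p⟫ ≠ c} = ∅ := by simpa [filter_eq_self] using hA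
    rw [this, Finset.card_empty, Nat.cast_zero, zero_div, Nat.ceil_zero, zero_add,
      Nat.one_le_ceil_iff]
    exact div_pos (Nat.cast_pos.2 (card_pos.2 hP)) hd
  · exact Nat.ceil_div_add_one_le hd (Nat.cast_nonneg _) (by exact_mod_cast (by omega))

theorem Finset.card_filter_mem_interior_convexHull_add_le [FiniteDimensional ℝ E]
    [Nontrivial E] (S : Finset E) (hS : finrank ℝ E + 1 ≤ #S)
    [DecidablePred (· ∈ interior (convexHull ℝ (S : Set E)))] :
    #{p ∈ S | p ∈ interior (convexHull ℝ (S : Set E))} + (finrank ℝ E + 1) ≤ #S := by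
  classical
  rcases (interior (convexHull ℝ (S : Set E))).eq_empty_or_nonempty with h | h
  · simpa [h] using hS
  set X := {p ∈ S | p ∈ (convexHull ℝ (S : Set E)).extremePoints ℝ}
  have hXC : convexHull ℝ (X : Set E) = convexHull ℝ S := by
    have hX : (X : Set E) = (convexHull ℝ (S : Set E)).extremePoints ℝ := by
      ext p
      simpa [X] using fun hp => mem_coe.1 (extremePoints_convexHull_subset hp)
    rw [← (X.finite_toSet.isCompact_convexHull ℝ).isClosed.closure_eq, hX,
      closure_convexHull_extremePoints (S.finite_toSet.isCompact_convexHull ℝ)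
      (convex_convexHull ℝ _)]
  have hXspan : vectorSpan ℝ (X : Set E) = ⊤ := by
    rw [← direction_affineSpan, interior_convexHull_nonempty_iff_affineSpan_eq_top.1 (hXC ▸ h),
      AffineSubspace.direction_top]
  have hXcard : finrank ℝ E + 1 ≤ #X := by
    have hXne : X.Nonempty := X.nonempty_iff_ne_empty.2 fun hX => by simp [hX] at hXspan
    have := X.finrank_vectorSpan_add_one_le_card (k := ℝ) hXne
    rwa [hXspan, finrank_top] at this
  have hint : {p ∈ S | p ∈ interior (convexHull ℝ (S : Set E))} ⊆
      {p ∈ S | p ∉ (convexHull ℝ (S : Set E)).extremePoints ℝ} := fun p hp => by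
    obtain ⟨hpS, hp⟩ := mem_filter.1 hp
    exact mem_filter.2 ⟨hpS, Set.disjoint_left.1 (disjoint_interior_extremePoints _) hp⟩
  have hsplit : #X + #{p ∈ S | p ∉ (convexHull ℝ (S : Set E)).extremePoints ℝ} = #S :=
    card_filter_add_card_filter_not _
  have := card_le_card hint
  omega

end InnerProductSpace

/-- Any set of `n ≥ d+1` points in `ℝ^d` admits a Steiner convex partition
with at most `⌈(n-1)/d⌉` tiles. -/
theorem steiner_partition_upper_bound (d : ℕ) (hd : 0 < d)
    (S : Finset (EuclideanSpace ℝ (Fin d))) (hS : d + 1 ≤ S.card) :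
    ∃ 𝒯 : Finset (Set (EuclideanSpace ℝ (Fin d))),
      IsSteinerConvexPartition d S 𝒯 ∧
      𝒯.card ≤ ⌈((S.card : ℚ) - 1) / d⌉₊ := by
  classical
  have : Nonempty (Fin d) := ⟨⟨0, hd⟩⟩
  have hfinrank : finrank ℝ (EuclideanSpace ℝ (Fin d)) = d := finrank_euclideanSpace_fin
  obtain ⟨𝒯, h𝒯, hcard⟩ := exists_isConvexPartition_card_le (convex_convexHull ℝ _)
    (S.finite_toSet.isCompact_convexHull ℝ) {p ∈ S | p ∈ interior (convexHull ℝ (S : Set _))}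
  have hinterior := S.card_filter_mem_interior_convexHull_add_le (hfinrank.symm ▸ hS)
  rw [hfinrank] at hcard hinterior
  refine ⟨𝒯, h𝒯.of_filter_mem_interior, hcard.trans <|
    Nat.ceil_div_add_one_le (by exact_mod_cast hd) (Nat.cast_nonneg _) ?_⟩
  have : ((#{p ∈ S | p ∈ interior (convexHull ℝ (S : Set _))} + d + 1 : ℕ) : ℚ) ≤ #S := by
    exact_mod_cast (by omega)
  push_cast at this
  linarith
end

section
/- Let C ⊆ [0,1]^d be a convex body, m a positive integer, G(m) = {(i₁,...,i_d)/m : 0 ≤ iⱼ ≤ m integers} the grid, and D = conv(C ∩ G(m)). Then vol(C) − vol(D) ≤ c(d)/m for a constant c(d) depending only on d (one may take c(d) = 4d²). -/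
/-!
Call `x ∈ C` deep if `x ± (d/m) e_j ∈ C` for every `j`. Averaging these `2d` points, convexity
puts the cube of side `2/m` around a deep point inside `C`; that cube contains every vertex of the
grid cell containing the point, so deep points lie in `D`.

A point of `C` that is not deep lies in an exit set `{x ∈ C | x + v ∉ C}` for one of the vectors
`v = ±(d/m) e_j`. By convexity the shifted copies `exitSet - k v`, `0 ≤ k < m`, are pairwise
disjoint, and they all lie in the unit cube stretched by `m |v| = d` along `e_j`, a box of volume
`1 + d ≤ 2d`. Hence each of the `2d` exit sets has volume at most `2d/m`.
-/

open MeasureTheory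

/-- The uniform grid `G(m) = {(i₁,…,i_d)/m : 0 ≤ iⱼ ≤ m}` in `[0,1]^d`. -/
def grid (d m : ℕ) : Set (EuclideanSpace ℝ (Fin d)) :=
  {x | ∀ j : Fin d, ∃ i : ℕ, i ≤ m ∧ x j = (i : ℝ) / m}

open Set ENNReal Function

theorem LinearEquiv.convexHull_preimage {E F : Type*} [AddCommGroup E] [Module ℝ E]
    [AddCommGroup F] [Module ℝ F] (e : E ≃ₗ[ℝ] F) (s : Set F) :
    convexHull ℝ (e ⁻¹' s) = e ⁻¹' convexHull ℝ s := by
  rw [← e.image_symm_eq_preimage, ← e.image_symm_eq_preimage]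
  exact (e.symm.toLinearMap.image_convexHull s).symm

section Convex

variable {E : Type*} [AddCommGroup E] [Module ℝ E] {s : Set E}

theorem Convex.add_smul_mem_of_abs_le (hs : Convex ℝ s) {x y : E} (h₁ : x + y ∈ s)
    (h₂ : x - y ∈ s) {t : ℝ} (ht : |t| ≤ 1) : x + t • y ∈ s := by
  rw [abs_le] at ht
  convert hs h₁ h₂ (a := (1 + t) / 2) (b := (1 - t) / 2) (by linarith) (by linarith) (by ring)
    using 1
  match_scalars <;> ring

def exitSet (s : Set E) (v : E) : Set E := {x ∈ s | x + v ∉ s}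

theorem Convex.add_smul_notMem_of_mem_exitSet (hs : Convex ℝ s) {x v : E}
    (hx : x ∈ exitSet s v) {r : ℝ} (hr : 1 ≤ r) : x + r • v ∉ s := fun h ↦ by
  have := hs.add_smul_mem hx.1 h ⟨by positivity, inv_le_one_of_one_le₀ hr⟩
  rw [smul_smul, inv_mul_cancel₀ (by positivity), one_smul] at this
  exact hx.2 this

variable [MeasurableSpace E] [MeasurableAdd E] (μ : Measure E) [μ.IsAddRightInvariant]

theorem Convex.natCast_mul_measure_exitSet_le (hs : Convex ℝ s) (hsm : MeasurableSet s)
    (v : E) (N : ℕ) : N * μ (exitSet s v) ≤ μ (⋃ k : Fin N, (· + (k : ℝ) • v) ⁻¹' s) := by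
  set f : Fin N → Set E := fun k ↦ (· + (k : ℝ) • v) ⁻¹' exitSet s v
  -- once a point has left `s` along `v`, convexity keeps it from coming back
  have hdisj : Pairwise (Disjoint on f) := by
    intro k l hkl
    wlog hlt : k < l generalizing k l
    · exact (this hkl.symm (lt_of_le_of_ne (not_lt.1 hlt) hkl.symm)).symm
    refine disjoint_left.2 fun x hk hl ↦ ?_
    have hkl : (1 : ℝ) ≤ (l : ℝ) - k := by
      have : (k : ℝ) + 1 ≤ l := by exact_mod_cast hlt
      linarith
    refine hs.add_smul_notMem_of_mem_exitSet hk hkl ?_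
    convert hl.1 using 1
    simp only [sub_smul, add_assoc, add_sub_cancel]
  have hf : ∀ k, MeasurableSet (f k) := fun k ↦
    measurable_add_const _ (hsm.diff (measurable_add_const v hsm))
  calc (N : ℝ≥0∞) * μ (exitSet s v) = ∑ k, μ (f k) := by simp [f, measure_preimage_add_right]
    _ = μ (⋃ k, f k) := by rw [measure_iUnion hdisj hf, tsum_fintype]
    _ ≤ μ (⋃ k : Fin N, (· + (k : ℝ) • v) ⁻¹' s) := measure_mono (iUnion_mono fun k x hx ↦ hx.1)

end Convex

namespace EuclideanSpace

variable {ι : Type*} [Fintype ι]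

theorem volume_setOf_forall_mem_Icc (a b : ι → ℝ) :
    volume {x : EuclideanSpace ℝ ι | ∀ i, x i ∈ Icc (a i) (b i)} =
      ∏ i, ENNReal.ofReal (b i - a i) := by
  have : {x : EuclideanSpace ℝ ι | ∀ i, x i ∈ Icc (a i) (b i)} = WithLp.ofLp ⁻¹' Icc a b := by
    ext x
    simp [Pi.le_def, forall_and]
  rw [this, (PiLp.volume_preserving_ofLp ι).measure_preimage measurableSet_Icc.nullMeasurableSet,
    Real.volume_Icc_pi]

variable [DecidableEq ι] {C : Set (EuclideanSpace ℝ ι)}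

theorem volume_iUnion_preimage_add_smul_single_le (hCu : C ⊆ {x | ∀ i, x i ∈ Icc (0 : ℝ) 1})
    (j : ι) (t : ℝ) (N : ℕ) :
    volume (⋃ k : Fin N, (· + (k : ℝ) • single j t) ⁻¹' C) ≤ ENNReal.ofReal (1 + N * |t|) := by
  set L : ℝ := N * t
  -- the union lies in the unit cube stretched along `e_j` over the segment `[0, -L]`
  have hbox : (⋃ k : Fin N, (· + (k : ℝ) • single j t) ⁻¹' C) ⊆
      {x | ∀ i, x i ∈
        Icc (if i = j then min 0 (-L) else 0) (if i = j then 1 + max 0 (-L) else 1)} := by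
    simp only [subset_def, mem_iUnion, mem_preimage, mem_ofPred_eq]
    rintro x ⟨k, hk⟩ i
    have hki := hCu hk i
    by_cases hij : i = j
    · subst hij
      simp only [PiLp.add_apply, PiLp.smul_apply, PiLp.single_apply, if_true, smul_eq_mul,
        mem_Icc] at hki ⊢
      have hkN : (k : ℝ) ≤ N := by exact_mod_cast k.is_lt.le
      have hk0 : (0 : ℝ) ≤ k := k.val.cast_nonneg
      have hkt : min 0 (-L) ≤ -(k * t) ∧ -(k * t) ≤ max 0 (-L) := by
        rcases le_total 0 t with ht | ht
        · exact ⟨min_le_of_right_le (by nlinarith), le_max_of_le_left (by nlinarith)⟩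
        · exact ⟨min_le_of_left_le (by nlinarith), le_max_of_le_right (by nlinarith)⟩
      constructor <;> linarith [hkt.1, hkt.2]
    · simpa [hij] using hki
  calc _ ≤ _ := measure_mono hbox
    _ = ENNReal.ofReal (1 + |L|) := by
      rw [volume_setOf_forall_mem_Icc, Finset.prod_eq_single j (fun i _ hi ↦ by simp [hi])
        (by simp)]
      simp only [if_true, add_sub_assoc, max_sub_min_eq_abs, sub_zero, abs_neg]
    _ = ENNReal.ofReal (1 + N * |t|) := by rw [abs_mul, Nat.abs_cast]

theorem measureReal_exitSet_single_le (hC : Convex ℝ C) (hCm : MeasurableSet C)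
    (hCu : C ⊆ {x | ∀ i, x i ∈ Icc (0 : ℝ) 1}) (j : ι) (t : ℝ) {N : ℕ} (hN : 0 < N) :
    volume.real (exitSet C (single j t)) ≤ (1 + N * |t|) / N := by
  have hNpos : (0 : ℝ) < N := by exact_mod_cast hN
  refine ENNReal.toReal_le_of_le_ofReal (by positivity) ?_
  rw [ENNReal.ofReal_div_of_pos hNpos, ofReal_natCast,
    ENNReal.le_div_iff_mul_le (by simp [hN.ne']) (by simp), mul_comm]
  exact (hC.natCast_mul_measure_exitSet_le volume hCm _ N).trans
    (volume_iUnion_preimage_add_smul_single_le hCu j t N)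

theorem _root_.Convex.add_mem_of_forall_add_single_mem [Nonempty ι] (hC : Convex ℝ C)
    {x u : EuclideanSpace ℝ ι} (h : ∀ j, x + single j (Fintype.card ι * u j) ∈ C) :
    x + u ∈ C := by
  have hcard : (Fintype.card ι : ℝ) ≠ 0 := Nat.cast_ne_zero.2 Fintype.card_ne_zero
  have hbary : x + u = ∑ j, (Fintype.card ι : ℝ)⁻¹ • (x + single j (Fintype.card ι * u j)) := by
    ext i
    simp [Finset.sum_add_distrib, Pi.single_apply, hcard]
  rw [hbary]
  exact hC.sum_mem (fun _ _ ↦ by positivity) (by simp [hcard]) fun j _ ↦ h j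

end EuclideanSpace

theorem exists_nat_div_le_le_succ_div {m : ℕ} (hm : 0 < m) {t : ℝ} (ht : t ∈ Icc (0 : ℝ) 1) :
    ∃ i : ℕ, i < m ∧ i / m ≤ t ∧ t ≤ (i + 1) / m := by
  have hmR : (0 : ℝ) < m := by exact_mod_cast hm
  -- the last cell is closed on the right, so `t = 1` falls into cell `m - 1`
  refine ⟨min ⌊m * t⌋₊ (m - 1), by omega, ?_, ?_⟩
  · rw [div_le_iff₀ hmR, mul_comm]
    exact (Nat.cast_le.2 (min_le_left _ _)).trans (Nat.floor_le (by nlinarith [ht.1]))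
  · rw [le_div_iff₀ hmR, mul_comm]
    rcases min_choice ⌊m * t⌋₊ (m - 1) with h | h <;> rw [h]
    · exact (Nat.lt_floor_add_one _).le
    · rw [Nat.cast_sub hm, Nat.cast_one, sub_add_cancel]
      nlinarith [ht.2]

theorem mem_convexHull_nearby_nat_div {m : ℕ} (hm : 0 < m) {t : ℝ} (ht : t ∈ Icc (0 : ℝ) 1) :
    t ∈ convexHull ℝ {a : ℝ | (∃ i : ℕ, i ≤ m ∧ a = i / m) ∧ |a - t| ≤ 1 / m} := by
  obtain ⟨i, him, hlo, hhi⟩ := exists_nat_div_le_le_succ_div hm ht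
  have hcell : (i + 1 : ℝ) / m = i / m + 1 / m := by ring
  refine convexHull_mono (s := {(i : ℝ) / m, (i + 1 : ℝ) / m}) (pair_subset ?_ ?_) ?_
  · exact ⟨⟨i, him.le, rfl⟩, by rw [abs_le]; constructor <;> linarith⟩
  · exact ⟨⟨i + 1, him, by simp⟩, by rw [abs_le]; constructor <;> linarith⟩
  · rw [convexHull_pair, segment_eq_Icc (hlo.trans hhi)]
    exact ⟨hlo, hhi⟩

theorem mem_convexHull_nearby_grid {d m : ℕ} (hm : 0 < m) {x : EuclideanSpace ℝ (Fin d)}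
    (hx : ∀ j, x j ∈ Icc (0 : ℝ) 1) :
    x ∈ convexHull ℝ {y ∈ grid d m | ∀ j, |y j - x j| ≤ 1 / m} := by
  have hcells : {y ∈ grid d m | ∀ j, |y j - x j| ≤ 1 / m} = WithLp.linearEquiv 2 ℝ _ ⁻¹'
      univ.pi fun j ↦ {a : ℝ | (∃ i : ℕ, i ≤ m ∧ a = i / m) ∧ |a - x j| ≤ 1 / m} := by
    ext y
    simp [grid, forall_and]
  rw [hcells, LinearEquiv.convexHull_preimage]
  exact mem_convexHull_pi fun j _ ↦ mem_convexHull_nearby_nat_div hm (hx j)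

theorem mem_convexHull_inter_grid {d m : ℕ} (hd : 0 < d) (hm : 0 < m)
    {C : Set (EuclideanSpace ℝ (Fin d))} (hC : Convex ℝ C)
    (hCu : C ⊆ {x | ∀ j, x j ∈ Icc (0 : ℝ) 1}) {x : EuclideanSpace ℝ (Fin d)} (hx : x ∈ C)
    (h : ∀ j, x + EuclideanSpace.single j ((d : ℝ) / m) ∈ C ∧
      x - EuclideanSpace.single j ((d : ℝ) / m) ∈ C) :
    x ∈ convexHull ℝ (C ∩ grid d m) := by
  have : Nonempty (Fin d) := Fin.pos_iff_nonempty.1 hd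
  have hmR : (0 : ℝ) < m := by exact_mod_cast hm
  -- the cube of side `2 / m` around `x` lies in the cross-polytope spanned by the `x ± (d / m) e_j`
  have hnear : {y | ∀ j, |y j - x j| ≤ 1 / m} ⊆ C := fun y hy ↦ by
    rw [← add_sub_cancel x y]
    refine hC.add_mem_of_forall_add_single_mem fun j ↦ ?_
    have hscale : EuclideanSpace.single j (Fintype.card (Fin d) * (y - x) j) =
        ((m : ℝ) * (y j - x j)) • EuclideanSpace.single j ((d : ℝ) / m) := by
      ext i
      by_cases hij : i = j
      · subst hij
        simp only [Fintype.card_fin, PiLp.sub_apply, PiLp.single_eq_same, PiLp.smul_apply,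
          smul_eq_mul]
        field_simp
      · simp [hij]
    rw [hscale]
    refine hC.add_smul_mem_of_abs_le (h j).1 (h j).2 ?_
    rw [abs_mul, abs_of_pos hmR, ← le_div_iff₀' hmR]
    exact hy j
  refine convexHull_mono ?_ (mem_convexHull_nearby_grid hm (hCu hx))
  exact fun y hy ↦ ⟨hnear hy.2, hy.1⟩

theorem subset_convexHull_inter_grid_union_exitSet {d m : ℕ} (hd : 0 < d) (hm : 0 < m)
    {C : Set (EuclideanSpace ℝ (Fin d))} (hC : Convex ℝ C)
    (hCu : C ⊆ {x | ∀ j, x j ∈ Icc (0 : ℝ) 1}) :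
    C ⊆ convexHull ℝ (C ∩ grid d m) ∪ ⋃ j, (exitSet C (EuclideanSpace.single j ((d : ℝ) / m)) ∪
      exitSet C (EuclideanSpace.single j (-((d : ℝ) / m)))) := fun x hx ↦ by
  by_contra hout
  simp only [mem_union, not_or, mem_iUnion, not_exists] at hout
  refine hout.1 (mem_convexHull_inter_grid hd hm hC hCu hx fun j ↦ ?_)
  simpa [exitSet, hx, PiLp.single_neg, ← sub_eq_add_neg] using hout.2 j

/-- If `C ⊆ [0,1]^d` is a convex body and `D = conv(C ∩ G(m))` is its discrete
hull, then `vol C − vol D ≤ 4d²/m`. -/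
theorem discrete_hull_volume (d m : ℕ) (hd : 0 < d) (hm : 0 < m)
    (C : Set (EuclideanSpace ℝ (Fin d)))
    (hC : Convex ℝ C) (hCc : IsCompact C)
    (hCu : C ⊆ {x | ∀ j : Fin d, x j ∈ Set.Icc (0 : ℝ) 1}) :
    (volume C).toReal - (volume (convexHull ℝ (C ∩ grid d m))).toReal ≤
      4 * (d : ℝ) ^ 2 / m := by
  have hmR : (0 : ℝ) < m := by exact_mod_cast hm
  set δ : ℝ := d / m
  set D := convexHull ℝ (C ∩ grid d m)
  set B : Fin d → Set (EuclideanSpace ℝ (Fin d)) := fun j ↦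
    exitSet C (EuclideanSpace.single j δ) ∪ exitSet C (EuclideanSpace.single j (-δ))
  have hcover : C ⊆ D ∪ ⋃ j, B j := subset_convexHull_inter_grid_union_exitSet hd hm hC hCu
  have hfin : volume (D ∪ ⋃ j, B j) ≠ ⊤ :=
    measure_ne_top_of_subset (union_subset (convexHull_min inter_subset_left hC)
      (iUnion_subset fun j ↦ union_subset (sep_subset _ _) (sep_subset _ _))) hCc.measure_lt_top.ne
  have hexit : ∀ j (t : ℝ), |t| = δ →
      volume.real (exitSet C (EuclideanSpace.single j t)) ≤ 2 * d / m := fun j t ht ↦ by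
    refine (EuclideanSpace.measureReal_exitSet_single_le hC hCc.measurableSet hCu j t hm).trans ?_
    rw [ht, mul_div_cancel₀ _ hmR.ne']
    gcongr
    linarith [(Nat.one_le_cast.2 hd : (1 : ℝ) ≤ d)]
  have hB : ∀ j, volume.real (B j) ≤ 2 * d / m + 2 * d / m := fun j ↦
    (measureReal_union_le _ _).trans (add_le_add (hexit j δ (abs_of_pos (by positivity)))
      (hexit j (-δ) (by rw [abs_neg, abs_of_pos (by positivity)])))
  calc volume.real C - volume.real D ≤ volume.real (⋃ j, B j) := by
        linarith [(measureReal_mono hcover hfin).trans (measureReal_union_le D _)]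
    _ ≤ ∑ j, volume.real (B j) := measureReal_iUnion_fintype_le B
    _ ≤ ∑ _j : Fin d, (2 * d / m + 2 * d / m : ℝ) := Finset.sum_le_sum fun j _ ↦ hB j
    _ = 4 * (d : ℝ) ^ 2 / m := by
        simp only [Finset.sum_const, Finset.card_univ, Fintype.card_fin, nsmul_eq_mul]
        ring
end

section
/- Let C ⊆ [0,1]^d be a convex body, m a positive integer, and p ∈ C a point such that the 2d points p ± (2d/m)·eᵢ (i = 1,...,d) all lie in C, where eᵢ are the standard basis vectors. Then p lies in the convex hull of C ∩ G(m), where G(m) is the uniform grid of side 1/m in [0,1]^d. -/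
open Finset

section CrossPolytope

variable {ι E : Type*} [Fintype ι] [AddCommGroup E] [Module ℝ E] {C : Set E} {p : E}

theorem Convex.add_sum_smul_sub_mem (hC : Convex ℝ C) (hp : p ∈ C) {w : ι → ℝ} {q : ι → E}
    (hw₀ : ∀ i, 0 ≤ w i) (hw₁ : ∑ i, w i ≤ 1) (hq : ∀ i, q i ∈ C) :
    p + ∑ i, w i • (q i - p) ∈ C := by
  have hcombo : ∑ o : Option ι, (o.elim (1 - ∑ i, w i) w) • (o.elim p q) =
      p + ∑ i, w i • (q i - p) := by
    simp only [Fintype.sum_option, Option.elim_none, Option.elim_some, smul_sub, sum_sub_distrib,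
      ← sum_smul, sub_smul, one_smul]
    abel
  rw [← hcombo]
  refine hC.sum_mem ?_ ?_ ?_
  · rintro (_ | i) -
    exacts [sub_nonneg.2 hw₁, hw₀ i]
  · simp [Fintype.sum_option]
  · rintro (_ | i) -
    exacts [hp, hq i]

theorem Convex.add_sum_smul_mem_of_sum_abs_le (hC : Convex ℝ C) (hp : p ∈ C) {e : ι → E} {r : ℝ}
    (he : ∀ i, p + r • e i ∈ C ∧ p - r • e i ∈ C) {c : ι → ℝ} (hc : ∑ i, |c i| ≤ r) :
    p + ∑ i, c i • e i ∈ C := by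
  have hr : 0 ≤ r := (sum_nonneg fun i _ => abs_nonneg (c i)).trans hc
  let q : ι → E := fun i => if 0 ≤ c i then p + r • e i else p - r • e i
  have hterm : ∀ i, (|c i| / r) • (q i - p) = c i • e i := by
    intro i
    rcases hr.eq_or_lt with rfl | hr
    · have : c i = 0 := abs_nonpos_iff.1 <| (single_le_sum (fun j _ => abs_nonneg (c j))
        (mem_univ i)).trans hc
      simp [this]
    by_cases hci : 0 ≤ c i
    · simp only [q, if_pos hci, add_sub_cancel_left, smul_smul, abs_of_nonneg hci,
        div_mul_cancel₀ _ hr.ne']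
    · simp only [q, if_neg hci, sub_sub_cancel_left, smul_smul, ← neg_smul,
        abs_of_neg (not_le.1 hci)]
      rw [neg_div, neg_mul_neg, div_mul_cancel₀ _ hr.ne']
  have hmem := hC.add_sum_smul_sub_mem hp (w := fun i => |c i| / r) (q := q)
    (fun i => div_nonneg (abs_nonneg _) hr)
    (by rw [← sum_div]; exact div_le_one_of_le₀ hc hr)
    (fun i => by by_cases hci : 0 ≤ c i <;> simp [q, hci, he i])
  simpa only [hterm] using hmem

end CrossPolytope

theorem EuclideanSpace.mem_of_sum_abs_sub_le {ι : Type*} [Fintype ι] [DecidableEq ι]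
    {C : Set (EuclideanSpace ℝ ι)} (hC : Convex ℝ C) {p v : EuclideanSpace ℝ ι} (hp : p ∈ C)
    {r : ℝ} (hr : ∀ i, p + r • single i (1 : ℝ) ∈ C ∧ p - r • single i (1 : ℝ) ∈ C)
    (hpv : ∑ j, |v j - p j| ≤ r) : v ∈ C := by
  have hexp : p + ∑ j, (v j - p j) • single j (1 : ℝ) = v := by
    conv_rhs => rw [← add_sub_cancel p v, ← (basisFun ι ℝ).sum_repr (v - p)]
    simp [basisFun_repr]
  simpa only [hexp] using hC.add_sum_smul_mem_of_sum_abs_le hp hr hpv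

theorem exists_nat_div_le_le_succ_div_s8 {x : ℝ} (hx : x ∈ Set.Icc (0 : ℝ) 1) {m : ℕ} (hm : 0 < m) :
    ∃ n : ℕ, n < m ∧ (n : ℝ) / m ≤ x ∧ x ≤ ((n : ℝ) + 1) / m := by
  have hm' : (0 : ℝ) < m := Nat.cast_pos.2 hm
  rcases hx.2.eq_or_lt with rfl | hx1
  · refine ⟨m - 1, Nat.sub_lt hm one_pos, ?_, ?_⟩ <;> rw [Nat.cast_pred hm]
    · rw [div_le_one hm']; linarith
    · rw [sub_add_cancel, div_self hm'.ne']
  · have hmx : (0 : ℝ) ≤ m * x := mul_nonneg hm'.le hx.1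
    refine ⟨⌊(m : ℝ) * x⌋₊, ?_, ?_, ?_⟩
    · exact Nat.floor_lt hmx |>.2 (by nlinarith)
    · rw [div_le_iff₀ hm', mul_comm x]; exact Nat.floor_le hmx
    · rw [le_div_iff₀ hm', mul_comm x]; exact (Nat.lt_floor_add_one _).le

theorem EuclideanSpace.mem_convexHull_box_vertices {ι : Type*} [Finite ι] {a b : ι → ℝ}
    {p : EuclideanSpace ℝ ι} (ha : ∀ j, a j ≤ p j) (hb : ∀ j, p j ≤ b j) :
    p ∈ convexHull ℝ {v : EuclideanSpace ℝ ι | ∀ j, v j = a j ∨ v j = b j} := by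
  have hpi : p.ofLp ∈ convexHull ℝ (Set.univ.pi fun j => ({a j, b j} : Set ℝ)) := by
    rw [convexHull_pi]
    intro j _
    change _ ∈ convexHull ℝ {a j, b j}
    rw [convexHull_pair, segment_eq_Icc ((ha j).trans (hb j))]
    exact ⟨ha j, hb j⟩
  have himg := LinearMap.image_convexHull (WithLp.linearEquiv 2 ℝ (ι → ℝ)).symm.toLinearMap
    (Set.univ.pi fun j => ({a j, b j} : Set ℝ))
  have hp : p ∈ (WithLp.linearEquiv 2 ℝ (ι → ℝ)).symm.toLinearMap ''
      convexHull ℝ (Set.univ.pi fun j => ({a j, b j} : Set ℝ)) := ⟨p.ofLp, hpi, rfl⟩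
  rw [himg] at hp
  refine convexHull_mono ?_ hp
  rintro _ ⟨v, hv, rfl⟩ j
  exact hv j (Set.mem_univ j)

theorem deep_point_in_discrete_hull_general (d m : ℕ) (hm : 0 < m)
    (C : Set (EuclideanSpace ℝ (Fin d))) (hC : Convex ℝ C)
    (hCu : C ⊆ {x | ∀ j : Fin d, x j ∈ Set.Icc (0 : ℝ) 1})
    (p : EuclideanSpace ℝ (Fin d)) (hp : p ∈ C)
    (hdeep : ∀ i : Fin d,
      p + (2 * (d : ℝ) / m) • EuclideanSpace.single i (1 : ℝ) ∈ C ∧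
      p - (2 * (d : ℝ) / m) • EuclideanSpace.single i (1 : ℝ) ∈ C) :
    p ∈ convexHull ℝ (C ∩ grid d m) := by
  choose n hnm hlow hhigh using fun j => exists_nat_div_le_le_succ_div_s8 (hCu hp j) hm
  refine convexHull_mono ?_ (EuclideanSpace.mem_convexHull_box_vertices hlow hhigh)
  intro v hv
  have hdist : ∀ j, |v j - p j| ≤ 1 / m := by
    intro j
    rw [abs_sub_le_iff]
    rcases hv j with h | h <;> rw [h] <;> constructor <;>
      linarith [hlow j, hhigh j, add_div (n j : ℝ) 1 m]
  refine ⟨EuclideanSpace.mem_of_sum_abs_sub_le hC hp hdeep ?_, fun j => ?_⟩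
  · calc ∑ j, |v j - p j| ≤ ∑ _j : Fin d, 1 / (m : ℝ) := sum_le_sum fun j _ => hdist j
      _ = d / m := by simp [div_eq_mul_inv]
      _ ≤ 2 * d / m := by gcongr; linarith
  · rcases hv j with h | h
    · exact ⟨n j, (hnm j).le, h⟩
    · exact ⟨n j + 1, hnm j, by rw [h]; push_cast; rfl⟩

/-- If `C ⊆ [0,1]^d` is a convex body, `p ∈ C`, and the `2d` points
`p ± (2d/m)eᵢ` all lie in `C`, then `p ∈ conv(C ∩ G(m))`. -/
theorem deep_point_in_discrete_hull (d m : ℕ) (hd : 0 < d) (hm : 0 < m)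
    (C : Set (EuclideanSpace ℝ (Fin d))) (hC : Convex ℝ C)
    (hCu : C ⊆ {x | ∀ j : Fin d, x j ∈ Set.Icc (0 : ℝ) 1})
    (p : EuclideanSpace ℝ (Fin d)) (hp : p ∈ C)
    (hdeep : ∀ i : Fin d,
      p + (2 * (d : ℝ) / m) • EuclideanSpace.single i (1 : ℝ) ∈ C ∧
      p - (2 * (d : ℝ) / m) • EuclideanSpace.single i (1 : ℝ) ∈ C) :
    p ∈ convexHull ℝ (C ∩ grid d m) :=
  deep_point_in_discrete_hull_general d m hm C hC hCu p hp hdeep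
end

section
/- For every set S of n points in the unit square [0,1]², there exists a convex body C ⊆ [0,1]² whose interior contains no point of S and whose area is at least 2/(n+4). -/
/-!
Induct on the number `k` of points of `S` inside a compact convex region `R`, looking for an
empty compact convex `C ⊆ R` with `μ C ≥ 2 μ R / (k + 4)`. If `k ≤ 1`, a line through the only
point cuts `R` into two empty pieces, one of which has at least half the measure. Otherwise, cut
along a line through two of the points `p ≠ q` with all points on one side (an edge of their
convex hull). The piece on the empty side is good enough unless its measure is below
`2 μ R / (k + 4)`; then the other piece has measure above `(k + 2) μ R / (k + 4)` and, since `p`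
and `q` lie on its boundary, at most `k - 2` points in its interior, so induction gives
`2 / (k + 2) · (k + 2) μ R / (k + 4)`.
-/

open MeasureTheory Set Finset

def IsEmptyConvexBody {E : Type*} [NormedAddCommGroup E] [NormedSpace ℝ E] (S C : Set E) :
    Prop :=
  Convex ℝ C ∧ IsCompact C ∧ ∀ p ∈ S, p ∉ interior C

lemma measureReal_le_inter_Iic_add_inter_Ici {α : Type*} [MeasurableSpace α] (μ : Measure α)
    {R : Set α} (hR : μ R ≠ ⊤) (f : α → ℝ) (c : ℝ) :
    μ.real R ≤ μ.real (R ∩ f ⁻¹' Iic c) + μ.real (R ∩ f ⁻¹' Ici c) :=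
  calc μ.real R ≤ μ.real ((R ∩ f ⁻¹' Iic c) ∪ (R ∩ f ⁻¹' Ici c)) := by
        refine measureReal_mono (fun x hx => ?_) ?_
        · rcases le_total (f x) c with h | h
          exacts [Or.inl ⟨hx, h⟩, Or.inr ⟨hx, h⟩]
        · exact measure_ne_top_of_subset (union_subset inter_subset_left inter_subset_left) hR
    _ ≤ _ := measureReal_union_le _ _

section Cut

variable {E : Type*} [NormedAddCommGroup E] [NormedSpace ℝ E] {S R : Set E}
  {f : StrongDual ℝ E}

lemma interior_inter_preimage (R : Set E) (hf : f ≠ 0) (I : Set ℝ) :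
    interior (R ∩ f ⁻¹' I) = interior R ∩ f ⁻¹' interior I := by
  rw [interior_inter,
    (f.isOpenMap_of_ne_zero hf).preimage_interior_eq_interior_preimage f.continuous]

lemma isEmptyConvexBody_inter_preimage (hR : Convex ℝ R) (hRc : IsCompact R) (hf : f ≠ 0)
    {I : Set ℝ} (hI : Convex ℝ I) (hIc : IsClosed I)
    (hS : ∀ s ∈ S, s ∈ interior R → f s ∉ interior I) :
    IsEmptyConvexBody S (R ∩ f ⁻¹' I) := by
  refine ⟨hR.inter (hI.linear_preimage f.toLinearMap),
    hRc.inter_right (hIc.preimage f.continuous), fun s hs hsC => ?_⟩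
  rw [interior_inter_preimage R hf] at hsC
  exact hS s hs hsC.1 hsC.2

lemma exists_isEmptyConvexBody_subset_half [MeasurableSpace E] (μ : Measure E)
    [IsFiniteMeasureOnCompacts μ] (hR : Convex ℝ R) (hRc : IsCompact R) (hf : f ≠ 0) {c : ℝ}
    (hS : ∀ s ∈ S, s ∈ interior R → f s = c) :
    ∃ C ⊆ R, IsEmptyConvexBody S C ∧ μ.real R / 2 ≤ μ.real C := by
  have hsplit := measureReal_le_inter_Iic_add_inter_Ici μ hRc.measure_lt_top.ne f c
  rcases le_total (μ.real (R ∩ f ⁻¹' Iic c)) (μ.real (R ∩ f ⁻¹' Ici c)) with h | h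
  · refine ⟨_, inter_subset_left, isEmptyConvexBody_inter_preimage hR hRc hf (convex_Ici c)
      isClosed_Ici fun s hs hsR => ?_, by linarith⟩
    simp [hS s hs hsR]
  · refine ⟨_, inter_subset_left, isEmptyConvexBody_inter_preimage hR hRc hf (convex_Iic c)
      isClosed_Iic fun s hs hsR => ?_, by linarith⟩
    simp [hS s hs hsR]

end Cut

lemma two_div_mul_le_of_cut {k A A₁ A₂ : ℝ} (hk : 2 ≤ k) (hA : A ≤ A₁ + A₂)
    (h₁ : A₁ < 2 / (k + 4) * A) : 2 / (k + 4) * A ≤ 2 / (k - 2 + 4) * A₂ := by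
  have hA₂ : (k + 2) / (k + 4) * A ≤ A₂ := by
    have : (k + 2) / (k + 4) = 1 - 2 / (k + 4) := by field_simp; ring
    rw [this]; linarith
  calc 2 / (k + 4) * A = 2 / (k + 2) * ((k + 2) / (k + 4) * A) := by field_simp
    _ ≤ 2 / (k - 2 + 4) * A₂ := by
      rw [show k - 2 + 4 = k + 2 by ring]
      gcongr

lemma EuclideanSpace.proj_ne_zero {𝕜 ι : Type*} [RCLike 𝕜] [DecidableEq ι] (i : ι) :
    EuclideanSpace.proj (𝕜 := 𝕜) i ≠ 0 := fun h => by
  simpa using DFunLike.congr_fun h (EuclideanSpace.single i 1)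

local notation "ℝ²" => EuclideanSpace ℝ (Fin 2)

lemma exists_functional_minimized_at_two_points (T : Finset ℝ²) (hT : 1 < #T) :
    ∃ f : StrongDual ℝ ℝ², f ≠ 0 ∧
      ∃ p ∈ T, ∃ q ∈ T, p ≠ q ∧ f p = f q ∧ ∀ t ∈ T, f p ≤ f t := by
  obtain ⟨p, hpT, hp⟩ := T.exists_min_image (· 0) (card_pos.1 (by omega))
  by_cases hvert : ∃ q ∈ T, q ≠ p ∧ q 0 = p 0
  · obtain ⟨q, hqT, hqp, hq⟩ := hvert
    exact ⟨_, EuclideanSpace.proj_ne_zero 0, p, hpT, q, hqT, hqp.symm, hq.symm, hp⟩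
  push Not at hvert
  have hright : ∀ t ∈ T, t ≠ p → 0 < t 0 - p 0 := fun t ht htp =>
    sub_pos.2 ((hp t ht).lt_of_ne (hvert t ht htp).symm)
  obtain ⟨q, hq, hqmin⟩ := (T.erase p).exists_min_image (fun t => (t 1 - p 1) / (t 0 - p 0))
    (card_pos.1 (by rw [card_erase_of_mem hpT]; omega))
  obtain ⟨hqp, hqT⟩ := mem_erase.1 hq
  have hq0 := hright q hqT hqp
  -- `f t - f p` is the cross product of `q - p` and `t - p`, nonnegative by minimality of the slope
  let f : StrongDual ℝ ℝ² :=
    (q 0 - p 0) • EuclideanSpace.proj 1 - (q 1 - p 1) • EuclideanSpace.proj 0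
  have hf : ∀ x, f x = (q 0 - p 0) * x 1 - (q 1 - p 1) * x 0 := fun x => rfl
  refine ⟨f, fun h => ?_, p, hpT, q, hqT, hqp.symm, by simp only [hf]; ring, fun t ht => ?_⟩
  · simpa [hf, hq0.ne'] using DFunLike.congr_fun h (EuclideanSpace.single 1 1)
  obtain rfl | htp := eq_or_ne t p
  · exact le_rfl
  have hslope := hqmin t (mem_erase.2 ⟨htp, ht⟩)
  rw [div_le_div_iff₀ hq0 (hright t ht htp)] at hslope
  simp only [hf]
  linarith

theorem exists_isEmptyConvexBody_subset_of_interior_subset (μ : Measure ℝ²)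
    [IsFiniteMeasureOnCompacts μ] (T : Finset ℝ²) {S R : Set ℝ²} (hR : Convex ℝ R)
    (hRc : IsCompact R) (hST : ∀ s ∈ S, s ∈ interior R → s ∈ T) :
    ∃ C ⊆ R, IsEmptyConvexBody S C ∧ 2 / (#T + 4) * μ.real R ≤ μ.real C := by
  induction T using Finset.strongInduction generalizing R with | _ T ih =>
  rcases le_or_gt #T 1 with hT | hT
  · obtain ⟨p, hp⟩ := card_le_one_iff_subset_singleton.1 hT
    obtain ⟨C, hCR, hC, hCμ⟩ := exists_isEmptyConvexBody_subset_half μ hR hRc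
      (EuclideanSpace.proj_ne_zero 0) (c := p 0)
      fun s hs hsR => by rw [mem_singleton.1 (hp (hST s hs hsR))]; rfl
    refine ⟨C, hCR, hC, ?_⟩
    calc 2 / (#T + 4) * μ.real R ≤ 1 / 2 * μ.real R := by
          gcongr ?_ * _
          rw [div_le_div_iff₀ (by positivity) two_pos]
          linarith
      _ = μ.real R / 2 := by ring
      _ ≤ μ.real C := hCμ
  obtain ⟨f, hf, p, hpT, q, hqT, hpq, hfpq, hmin⟩ := exists_functional_minimized_at_two_points T hT
  have hsplit := measureReal_le_inter_Iic_add_inter_Ici μ hRc.measure_lt_top.ne f (f p)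
  by_cases hlow : 2 / (#T + 4) * μ.real R ≤ μ.real (R ∩ f ⁻¹' Iic (f p))
  · refine ⟨_, inter_subset_left, isEmptyConvexBody_inter_preimage hR hRc hf (convex_Iic _)
      isClosed_Iic fun s hs hsR => ?_, hlow⟩
    simpa using hmin s (hST s hs hsR)
  have hqT' : q ∈ T.erase p := mem_erase.2 ⟨hpq.symm, hqT⟩
  have hST' : ∀ s ∈ S, s ∈ interior (R ∩ f ⁻¹' Ici (f p)) → s ∈ (T.erase p).erase q := by
    intro s hs hsR
    rw [interior_inter_preimage R hf, interior_Ici] at hsR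
    have hfs : f p < f s := hsR.2
    exact mem_erase.2 ⟨by rintro rfl; exact hfs.ne hfpq,
      mem_erase.2 ⟨by rintro rfl; exact hfs.ne rfl, hST s hs hsR.1⟩⟩
  obtain ⟨C, hCR, hC, hCμ⟩ := ih _ ((erase_ssubset hqT').trans (erase_ssubset hpT))
    (hR.inter ((convex_Ici _).linear_preimage f.toLinearMap))
    (hRc.inter_right (isClosed_Ici.preimage f.continuous)) hST'
  rw [card_erase_of_mem hqT', card_erase_of_mem hpT, Nat.sub_sub, Nat.cast_sub (by omega)] at hCμ
  refine ⟨C, hCR.trans inter_subset_left, hC, ?_⟩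
  exact (two_div_mul_le_of_cut (by exact_mod_cast hT) hsplit (not_le.1 hlow)).trans
    (by simpa using hCμ)

section UnitCube

variable {ι : Type*}

lemma unitCube_eq_preimage :
    {x : EuclideanSpace ℝ ι | ∀ j, x j ∈ Icc (0 : ℝ) 1} =
      WithLp.ofLp ⁻¹' univ.pi fun _ => Icc 0 1 := by
  ext x
  simp only [Set.mem_preimage, mem_univ_pi, mem_ofPred_eq]

lemma convex_unitCube : Convex ℝ {x : EuclideanSpace ℝ ι | ∀ j, x j ∈ Icc (0 : ℝ) 1} := by
  rw [unitCube_eq_preimage]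
  exact (convex_pi fun _ _ => convex_Icc 0 1).linear_preimage (WithLp.linearEquiv 2 ℝ _).toLinearMap

lemma isCompact_unitCube : IsCompact {x : EuclideanSpace ℝ ι | ∀ j, x j ∈ Icc (0 : ℝ) 1} := by
  rw [unitCube_eq_preimage]
  exact (PiLp.homeomorph 2 _).isCompact_preimage.2 (isCompact_univ_pi fun _ => isCompact_Icc)

lemma volume_unitCube [Fintype ι] :
    volume {x : EuclideanSpace ℝ ι | ∀ j, x j ∈ Icc (0 : ℝ) 1} = 1 := by
  rw [unitCube_eq_preimage, (PiLp.volume_preserving_ofLp ι).measure_preimage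
    (MeasurableSet.univ_pi fun _ => measurableSet_Icc).nullMeasurableSet, volume_pi_pi]
  simp

end UnitCube

theorem empty_convex_body_area_general (n : ℕ) (S : Finset (EuclideanSpace ℝ (Fin 2)))
    (hcard : S.card = n) :
    ∃ C : Set (EuclideanSpace ℝ (Fin 2)),
      Convex ℝ C ∧ IsCompact C ∧
      C ⊆ {x | ∀ j : Fin 2, x j ∈ Set.Icc (0 : ℝ) 1} ∧
      (∀ p ∈ S, p ∉ interior C) ∧
      2 / ((n : ℝ) + 4) ≤ (volume C).toReal := by
  obtain ⟨C, hC, ⟨hconv, hcomp, hempty⟩, hCμ⟩ := exists_isEmptyConvexBody_subset_of_interior_subset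
    volume S (S := S) convex_unitCube isCompact_unitCube fun s hs _ => hs
  refine ⟨C, hconv, hcomp, hC, hempty, ?_⟩
  rwa [measureReal_def, volume_unitCube, ENNReal.toReal_one, mul_one, hcard] at hCμ

/-- Amid any `n` points in the unit square there is an empty convex body of
area at least `2/(n+4)`. -/
theorem empty_convex_body_area (n : ℕ) (S : Finset (EuclideanSpace ℝ (Fin 2)))
    (hcard : S.card = n)
    (hS : (S : Set (EuclideanSpace ℝ (Fin 2))) ⊆
      {x | ∀ j : Fin 2, x j ∈ Set.Icc (0 : ℝ) 1}) :
    ∃ C : Set (EuclideanSpace ℝ (Fin 2)),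
      Convex ℝ C ∧ IsCompact C ∧
      C ⊆ {x | ∀ j : Fin 2, x j ∈ Set.Icc (0 : ℝ) 1} ∧
      (∀ p ∈ S, p ∉ interior C) ∧
      2 / ((n : ℝ) + 4) ≤ (volume C).toReal :=
  empty_convex_body_area_general n S hcard
end

section
/- Let B₁ be a rectangle in the plane with center o, side lengths a ≤ b satisfying a/√(a²+b²) > π/(5n), and let B₂ be the rectangle obtained by rotating B₁ about o by an angle of at most π/(5n). Then B₁ ⊆ 2B₂, where 2B₂ is the dilation of B₂ by factor 2 about o. -/
/-!
Undo the rotation: `x = o + s • u + t • v ∈ B₁` is the double, about `o`, of the rotation by `θ`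
of `o + ½ • rot (-θ) (s • u + t • v)`. In the frame `(u, v)` the latter point has coordinates
`((s cos θ + t σ) / 2, (t cos θ - s σ) / 2)` with `|σ| = |sin θ|`, and these stay within
`a / 2` and `b / 2` because `a ≤ b` and `b |sin θ| ≤ b |θ| ≤ b a / √(a² + b²) ≤ a`.
-/

open Real

noncomputable def rot (θ : ℝ) (x : ℝ × ℝ) : ℝ × ℝ :=
  (Real.cos θ * x.1 - Real.sin θ * x.2, Real.sin θ * x.1 + Real.cos θ * x.2)

lemma rot_smul (θ c : ℝ) (x : ℝ × ℝ) : rot θ (c • x) = c • rot θ x := by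
  ext <;> simp only [rot, Prod.smul_fst, Prod.smul_snd, smul_eq_mul] <;> ring

lemma rot_rot_neg (θ : ℝ) (x : ℝ × ℝ) : rot θ (rot (-θ) x) = x := by
  ext <;> simp only [rot, cos_neg, sin_neg]
  · linear_combination x.1 * sin_sq_add_cos_sq θ
  · linear_combination x.2 * sin_sq_add_cos_sq θ

lemma abs_mul_add_mul_le {x y c σ : ℝ} (hc : |c| ≤ 1) : |x * c + y * σ| ≤ |x| + |y| * |σ| :=
  calc |x * c + y * σ| ≤ |x * c| + |y * σ| := abs_add_le _ _
    _ ≤ |x| + |y| * |σ| := by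
      rw [abs_mul, abs_mul]
      gcongr
      exact mul_le_of_le_one_right (abs_nonneg x) hc

lemma mul_abs_sin_le_of_abs_le {a b θ : ℝ} (ha : 0 ≤ a) (hb : 0 < b)
    (hθ : |θ| ≤ a / √(a ^ 2 + b ^ 2)) : b * |sin θ| ≤ a := by
  have hb_le : b ≤ √(a ^ 2 + b ^ 2) := Real.le_sqrt_of_sq_le (by nlinarith)
  have hsin : |sin θ| ≤ a / b :=
    abs_sin_le_abs.trans (hθ.trans (div_le_div_of_nonneg_left ha hb hb_le))
  calc b * |sin θ| ≤ b * (a / b) := by gcongr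
    _ = a := mul_div_cancel₀ a hb.ne'

section Orthonormal

variable {u v : ℝ × ℝ}

lemma abs_det_le_one (hu : u.1 ^ 2 + u.2 ^ 2 = 1) (hv : v.1 ^ 2 + v.2 ^ 2 = 1) :
    |u.1 * v.2 - u.2 * v.1| ≤ 1 := by
  have lagrange : (u.1 * v.2 - u.2 * v.1) ^ 2 + (u.1 * v.1 + u.2 * v.2) ^ 2 = 1 := by
    linear_combination (v.1 ^ 2 + v.2 ^ 2) * hu + hv
  exact (sq_le_one_iff_abs_le_one _).mp (by nlinarith [sq_nonneg (u.1 * v.1 + u.2 * v.2)])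

-- In an orthonormal frame `(u, v)` of orientation `ε = ±1`, `rot θ` acts on coordinates
-- as `rot (εθ)`.
lemma rot_smul_add_smul (hu : u.1 ^ 2 + u.2 ^ 2 = 1) (hv : v.1 ^ 2 + v.2 ^ 2 = 1)
    (huv : u.1 * v.1 + u.2 * v.2 = 0) (θ s t : ℝ) :
    rot θ (s • u + t • v) =
      (s * cos θ - t * ((u.1 * v.2 - u.2 * v.1) * sin θ)) • u +
      (t * cos θ + s * ((u.1 * v.2 - u.2 * v.1) * sin θ)) • v := by
  ext <;> simp only [rot, Prod.fst_add, Prod.snd_add, Prod.smul_fst, Prod.smul_snd, smul_eq_mul]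
  · linear_combination sin θ * (s * (u.2 * hv - v.2 * huv) + t * (v.2 * hu - u.2 * huv))
  · linear_combination sin θ * (s * (v.1 * huv - u.1 * hv) + t * (u.1 * huv - v.1 * hu))

lemma exists_two_smul_rot_eq (hu : u.1 ^ 2 + u.2 ^ 2 = 1) (hv : v.1 ^ 2 + v.2 ^ 2 = 1)
    (huv : u.1 * v.1 + u.2 * v.2 = 0) {a b θ s t : ℝ} (hab : a ≤ b)
    (hsin : b * |sin θ| ≤ a) (hs : |s| ≤ a / 2) (ht : |t| ≤ b / 2) :
    ∃ s' t', |s'| ≤ a / 2 ∧ |t'| ≤ b / 2 ∧ (2 : ℝ) • rot θ (s' • u + t' • v) = s • u + t • v := by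
  set σ := (u.1 * v.2 - u.2 * v.1) * sin θ
  have hσ : |σ| ≤ |sin θ| := by
    rw [abs_mul]
    exact mul_le_of_le_one_left (abs_nonneg _) (abs_det_le_one hu hv)
  -- `(s', t')` are half the coordinates of `rot (-θ) (s • u + t • v)`
  refine ⟨(s * cos θ + t * σ) / 2, (t * cos θ + s * -σ) / 2, ?_, ?_, ?_⟩
  · have hsum := abs_mul_add_mul_le (x := s) (y := t) (σ := σ) (abs_cos_le_one θ)
    have hterm : |t| * |σ| ≤ b / 2 * |sin θ| :=
      mul_le_mul ht hσ (abs_nonneg _) (by linarith [abs_nonneg t])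
    rw [abs_div, abs_two]
    linarith
  · have hsum := abs_mul_add_mul_le (x := t) (y := s) (σ := -σ) (abs_cos_le_one θ)
    have hterm : |s| * |-σ| ≤ a / 2 := by
      rw [abs_neg]
      exact (mul_le_of_le_one_right (abs_nonneg s) (hσ.trans (abs_sin_le_one θ))).trans hs
    rw [abs_div, abs_two]
    linarith
  · have hinv : rot (-θ) (s • u + t • v) =
        (s * cos θ + t * σ) • u + (t * cos θ + s * -σ) • v := by
      rw [rot_smul_add_smul hu hv huv, cos_neg, sin_neg]
      congr 2 <;> ring
    have half : ((s * cos θ + t * σ) / 2) • u + ((t * cos θ + s * -σ) / 2) • v =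
        (1 / 2 : ℝ) • rot (-θ) (s • u + t • v) := by
      rw [hinv]
      module
    rw [half, rot_smul, smul_smul, rot_rot_neg]
    norm_num

end Orthonormal

theorem rotated_rectangle_cover_general (n : ℕ) (a b : ℝ)
    (ha : 0 < a) (hab : a ≤ b)
    (hthin : π / (5 * n) < a / Real.sqrt (a ^ 2 + b ^ 2))
    (o u v : ℝ × ℝ)
    (hu : u.1 ^ 2 + u.2 ^ 2 = 1) (hv : v.1 ^ 2 + v.2 ^ 2 = 1)
    (huv : u.1 * v.1 + u.2 * v.2 = 0)
    (B₁ B₂ : Set (ℝ × ℝ))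
    (hB₁ : B₁ = {x | ∃ s t : ℝ, |s| ≤ a / 2 ∧ |t| ≤ b / 2 ∧
      x = o + s • u + t • v})
    (θ : ℝ) (hθ : |θ| ≤ π / (5 * n))
    (hB₂ : B₂ = (fun x => o + rot θ (x - o)) '' B₁) :
    B₁ ⊆ (fun x => o + (2 : ℝ) • (x - o)) '' B₂ := by
  subst hB₁ hB₂
  rintro _ ⟨s, t, hs, ht, rfl⟩
  have hsin : b * |sin θ| ≤ a :=
    mul_abs_sin_le_of_abs_le ha.le (ha.trans_le hab) (hθ.trans hthin.le)
  obtain ⟨s', t', hs', ht', hrot⟩ := exists_two_smul_rot_eq hu hv huv hab hsin hs ht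
  refine ⟨o + rot θ (s' • u + t' • v), ⟨o + s' • u + t' • v, ⟨s', t', hs', ht', rfl⟩, ?_⟩, ?_⟩
  · simp only [add_assoc, add_sub_cancel_left]
  · simp only [add_sub_cancel_left, hrot, add_assoc]

/-- Let `B₁` be a rectangle with center `o`, orthonormal axes `u, v` and side
lengths `a ≤ b` satisfying `a/√(a²+b²) > π/(5n)`, and let `B₂` be obtained by
rotating `B₁` about `o` by an angle `θ` with `|θ| ≤ π/(5n)`. Then `B₁ ⊆ 2B₂`,
where `2B₂` is the dilation of `B₂` by factor `2` about `o`. -/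
theorem rotated_rectangle_cover (n : ℕ) (hn : 1 ≤ n) (a b : ℝ)
    (ha : 0 < a) (hab : a ≤ b)
    (hthin : π / (5 * n) < a / Real.sqrt (a ^ 2 + b ^ 2))
    (o u v : ℝ × ℝ)
    (hu : u.1 ^ 2 + u.2 ^ 2 = 1) (hv : v.1 ^ 2 + v.2 ^ 2 = 1)
    (huv : u.1 * v.1 + u.2 * v.2 = 0)
    (B₁ B₂ : Set (ℝ × ℝ))
    (hB₁ : B₁ = {x | ∃ s t : ℝ, |s| ≤ a / 2 ∧ |t| ≤ b / 2 ∧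
      x = o + s • u + t • v})
    (θ : ℝ) (hθ : |θ| ≤ π / (5 * n))
    (hB₂ : B₂ = (fun x => o + rot θ (x - o)) '' B₁) :
    B₁ ⊆ (fun x => o + (2 : ℝ) • (x - o)) '' B₂ :=
  rotated_rectangle_cover_general n a b ha hab hthin o u v hu hv huv B₁ B₂ hB₁ θ hθ hB₂
end

section
/- Suppose for every (h+1)-element subset T of a finite set B ⊂ ℝ^d there is a point of B in the interior of conv(T). Then in any Steiner convex partition of a set S ⊇ B (with B in the interior of conv(S)), each tile is incident to (has on its boundary) at most h points of B, and consequently the number of tiles is at least 2(|B|)/h, counting each interior point of B via two incident tiles. -/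
/-!
A tile `t` is convex and has no point of `S ⊇ B` in its interior. If it contained `h + 1` points
of `B`, their convex hull would lie in `t` and, by the Horton property, contain a point of `B` in
its interior, hence in the interior of `t`. On the other hand a point of `B` lies in the interior of
`conv S`, the union of the finitely many closed tiles, but in the interior of none of them, so it
lies in at least two tiles. Double counting the incidences gives `2 |B| ≤ h · #tiles`.
-/

open scoped Classical

open Finset

theorem card_filter_mem_le_of_forall_exists_mem_interior_convexHull
    {E : Type*} [AddCommGroup E] [Module ℝ E] [TopologicalSpace E] {B : Finset E} {h : ℕ}
    (hB : ∀ T ⊆ B, T.card = h + 1 → ∃ b ∈ B, b ∈ interior (convexHull ℝ (T : Set E)))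
    {t : Set E} (ht : Convex ℝ t) (hBt : ∀ b ∈ B, b ∉ interior t) :
    #(B.filter (· ∈ t)) ≤ h := by
  by_contra! hlt
  obtain ⟨T, hTt, hTcard⟩ := exists_subset_card_eq hlt
  obtain ⟨b, hbB, hbT⟩ := hB T (hTt.trans (filter_subset _ _)) hTcard
  have hTt' : (T : Set E) ⊆ t := fun x hx => (mem_filter.mp (hTt hx)).2
  exact hBt b hbB (interior_mono (convexHull_min hTt' ht) hbT)

theorem exists_ne_mem_of_mem_interior_biUnion {X : Type*} [TopologicalSpace X]
    {𝒯 : Finset (Set X)} (h𝒯 : ∀ t ∈ 𝒯, IsClosed t) {x : X}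
    (hx : x ∈ interior (⋃ t ∈ 𝒯, t)) {t₁ : Set X} (hxt₁ : x ∉ interior t₁) :
    ∃ t₂ ∈ 𝒯, t₂ ≠ t₁ ∧ x ∈ t₂ := by
  set C := ⋃ t ∈ 𝒯.erase t₁, t
  have hC : IsClosed C :=
    (𝒯.erase t₁).finite_toSet.isClosed_biUnion fun t ht => h𝒯 t (mem_of_mem_erase ht)
  suffices hxC : x ∈ C by
    obtain ⟨t₂, ht₂, hxt₂⟩ := Set.mem_iUnion₂.mp hxC
    exact ⟨t₂, mem_of_mem_erase ht₂, ne_of_mem_erase ht₂, hxt₂⟩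
  -- otherwise `interior (⋃ t ∈ 𝒯, t) \ C` is an open neighbourhood of `x` inside `t₁`
  by_contra hxC
  refine hxt₁ (mem_interior.mpr ⟨interior (⋃ t ∈ 𝒯, t) ∩ Cᶜ, ?_,
    isOpen_interior.inter hC.isOpen_compl, hx, hxC⟩)
  rintro y ⟨hy, hyC⟩
  obtain ⟨t, ht, hyt⟩ := Set.mem_iUnion₂.mp (interior_subset hy)
  by_contra hyt₁
  exact hyC (Set.mem_biUnion (mem_erase.mpr ⟨fun e => hyt₁ (e ▸ hyt), ht⟩) hyt)

theorem two_le_card_filter_mem_of_mem_interior_biUnion {X : Type*} [TopologicalSpace X]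
    {𝒯 : Finset (Set X)} (h𝒯 : ∀ t ∈ 𝒯, IsClosed t) {x : X}
    (hx : x ∈ interior (⋃ t ∈ 𝒯, t)) (hx𝒯 : ∀ t ∈ 𝒯, x ∉ interior t) :
    2 ≤ #(𝒯.filter (x ∈ ·)) := by
  obtain ⟨t₁, ht₁, hxt₁⟩ := Set.mem_iUnion₂.mp (interior_subset hx)
  obtain ⟨t₂, ht₂, hne, hxt₂⟩ := exists_ne_mem_of_mem_interior_biUnion h𝒯 hx (hx𝒯 t₁ ht₁)
  exact one_lt_card.mpr
    ⟨t₁, mem_filter.mpr ⟨ht₁, hxt₁⟩, t₂, mem_filter.mpr ⟨ht₂, hxt₂⟩, hne.symm⟩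

theorem horton_lower_bound_general (d h : ℕ)
    (S B : Finset (EuclideanSpace ℝ (Fin d))) (hBS : B ⊆ S)
    (hHorton : ∀ T ⊆ B, T.card = h + 1 →
      ∃ b ∈ B, b ∈ interior (convexHull ℝ (T : Set (EuclideanSpace ℝ (Fin d)))))
    (hBint : (B : Set (EuclideanSpace ℝ (Fin d))) ⊆
      interior (convexHull ℝ (S : Set (EuclideanSpace ℝ (Fin d)))))
    (𝒯 : Finset (Set (EuclideanSpace ℝ (Fin d))))
    (h𝒯 : IsSteinerConvexPartition d S 𝒯) :
    (∀ t ∈ 𝒯, (B.filter (fun b => b ∈ t)).card ≤ h) ∧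
    (2 * (B.card : ℚ)) / h ≤ (𝒯.card : ℚ) := by
  obtain ⟨htiles, hcover, -⟩ := h𝒯
  have hempty : ∀ t ∈ 𝒯, ∀ b ∈ B, b ∉ interior t := fun t ht b hb =>
    (htiles t ht).2.2 b (hBS hb)
  have hincident : ∀ t ∈ 𝒯, #(B.filter (· ∈ t)) ≤ h := fun t ht =>
    card_filter_mem_le_of_forall_exists_mem_interior_convexHull hHorton (htiles t ht).1
      (hempty t ht)
  have hcovered : ∀ b ∈ B, 2 ≤ #(𝒯.filter (b ∈ ·)) := fun b hb =>
    two_le_card_filter_mem_of_mem_interior_biUnion (fun t ht => (htiles t ht).2.1.isClosed)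
      (hcover ▸ hBint hb) fun t ht => hempty t ht b hb
  have hcount : #B * 2 ≤ #𝒯 * h :=
    card_mul_le_card_mul (fun b t => b ∈ t) hcovered hincident
  refine ⟨hincident, div_le_of_le_mul₀ (by positivity) (by positivity) ?_⟩
  exact_mod_cast (mul_comm 2 #B).trans_le hcount

/-- If every `(h+1)`-element subset of `B` contains a point of `B` in the
interior of its convex hull (a generalized Horton set), then in any Steiner
convex partition of `S ⊇ B` (with `B` interior to `conv S`), each tile is
incident to at most `h` points of `B`, and the number of tiles is at least
`2|B|/h`. -/
theorem horton_lower_bound (d h : ℕ) (hh : 1 ≤ h)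
    (S B : Finset (EuclideanSpace ℝ (Fin d))) (hBS : B ⊆ S)
    (hHorton : ∀ T ⊆ B, T.card = h + 1 →
      ∃ b ∈ B, b ∈ interior (convexHull ℝ (T : Set (EuclideanSpace ℝ (Fin d)))))
    (hBint : (B : Set (EuclideanSpace ℝ (Fin d))) ⊆
      interior (convexHull ℝ (S : Set (EuclideanSpace ℝ (Fin d)))))
    (𝒯 : Finset (Set (EuclideanSpace ℝ (Fin d))))
    (h𝒯 : IsSteinerConvexPartition d S 𝒯) :
    (∀ t ∈ 𝒯, (B.filter (fun b => b ∈ t)).card ≤ h) ∧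
    (2 * (B.card : ℚ)) / h ≤ (𝒯.card : ℚ) :=
  horton_lower_bound_general d h S B hBS hHorton hBint 𝒯 h𝒯
end

section
/- Consider the points p_{a,b} = (a, b, a² − b²) ∈ ℝ³ for integers a, b. For every pair of integers (a,b), the four points p_{a,b}, p_{a+1,b}, p_{a,b+1}, p_{a+1,b+1} are coplanar and form a parallelogram, and no two of these parallelograms (for distinct (a,b)) are coplanar. -/
/-!
The plane through `p_{a,b}`, `p_{a+1,b}`, `p_{a,b+1}` contains the saddle point `p_{c,d}` exactly
when `(c - a)(c - a - 1) = (d - b)(d - b - 1)`. The fourth corner `p_{a+1,b+1}` satisfies this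
(both sides vanish). Since consecutive values of `x (x - 1)` differ by `2x`, the three corners
`p_{a',b'}`, `p_{a'+1,b'}`, `p_{a',b'+1}` of another parallelogram satisfy it only if
`(a', b') = (a, b)`.
-/

/-- The lattice points on the saddle surface `z = x² − y²`. -/
noncomputable def saddle (a b : ℤ) : EuclideanSpace ℝ (Fin 3) :=
  WithLp.toLp 2 ![(a : ℝ), (b : ℝ), (a : ℝ) ^ 2 - (b : ℝ) ^ 2]

section AffineSpace

variable {k V P : Type*} [AddCommGroup V] [AddTorsor V P]

theorem mem_affineSpan_triple_iff [Ring k] [Module k V] {p₁ p₂ p₃ p : P} :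
    p ∈ affineSpan k {p₁, p₂, p₃} ↔
      ∃ r₂ r₃ : k, r₂ • (p₂ -ᵥ p₁) + r₃ • (p₃ -ᵥ p₁) = p -ᵥ p₁ := by
  rw [← AffineSubspace.vsub_right_mem_direction_iff_mem (mem_affineSpan k (Set.mem_insert _ _)),
    direction_affineSpan, vectorSpan_eq_span_vsub_set_right k (Set.mem_insert _ _)]
  simp [Set.image_insert_eq, Submodule.span_insert_zero, Submodule.mem_span_pair]

theorem Coplanar.mem_affineSpan_of_not_collinear [DivisionRing k] [Module k V] {s : Set P}
    (hs : Coplanar k s) {p₁ p₂ p₃ p : P} (h₁ : p₁ ∈ s) (h₂ : p₂ ∈ s) (h₃ : p₃ ∈ s)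
    (hn : ¬Collinear k {p₁, p₂, p₃}) (hp : p ∈ s) : p ∈ affineSpan k {p₁, p₂, p₃} := by
  have := hs.finiteDimensional_vectorSpan
  have hle : vectorSpan k {p₁, p₂, p₃} ≤ vectorSpan k s :=
    vectorSpan_mono k (Set.insert_subset h₁ (Set.insert_subset h₂ (Set.singleton_subset_iff.2 h₃)))
  have := Submodule.finiteDimensional_of_le hle
  rw [collinear_iff_finrank_le_one, not_le] at hn
  have heq : vectorSpan k {p₁, p₂, p₃} = vectorSpan k s :=
    Submodule.eq_of_le_of_finrank_le hle (by linarith [hs.finrank_le_two])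
  rw [← AffineSubspace.vsub_right_mem_direction_iff_mem (mem_affineSpan k (Set.mem_insert _ _)),
    direction_affineSpan, heq]
  exact vsub_mem_vectorSpan k hp h₁

end AffineSpace

theorem saddle_add_saddle (a b c d : ℤ) : saddle a b + saddle c d = saddle c b + saddle a d := by
  ext i
  fin_cases i <;> simp [saddle] <;> ring

theorem saddle_mem_affineSpan_iff (a b c d : ℤ) :
    saddle c d ∈ affineSpan ℝ {saddle a b, saddle (a + 1) b, saddle a (b + 1)} ↔
      (c - a) * (c - a - 1) = (d - b) * (d - b - 1) := by
  have hplane : (c - a) * (c - a - 1) = (d - b) * (d - b - 1) ↔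
      ((c : ℝ) - a) * ((a + 1) ^ 2 - a ^ 2) + (d - b) * (b ^ 2 - (b + 1) ^ 2) =
        c ^ 2 - d ^ 2 - (a ^ 2 - b ^ 2) := by
    rw [← @Int.cast_inj ℝ]
    push_cast
    constructor <;> intro h <;> linear_combination (-1 : ℝ) * h
  rw [mem_affineSpan_triple_iff, hplane]
  constructor
  · rintro ⟨r, s, h⟩
    obtain rfl : r = c - a := by simpa [saddle] using congrArg (· 0) h
    obtain rfl : s = d - b := by simpa [saddle] using congrArg (· 1) h
    simpa [saddle] using congrArg (· 2) h
  · intro h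
    refine ⟨c - a, d - b, ?_⟩
    ext i
    fin_cases i <;> simp [saddle, h]

theorem saddle_not_collinear (a b : ℤ) :
    ¬Collinear ℝ {saddle a b, saddle (a + 1) b, saddle a (b + 1)} := by
  intro h
  have hne : saddle a b ≠ saddle (a + 1) b := fun heq => by
    simpa [saddle] using congrArg (· 0) heq
  obtain ⟨r, hr⟩ := mem_affineSpan_pair_iff_exists_lineMap_eq.1 <|
    h.mem_affineSpan_of_mem_of_ne (by simp) (by simp) (p₃ := saddle a (b + 1)) (by simp) hne
  simpa [saddle, AffineMap.lineMap_apply] using congrArg (· 1) hr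

def saddleParallelogram (a b : ℤ) : Set (EuclideanSpace ℝ (Fin 3)) :=
  {saddle a b, saddle (a + 1) b, saddle a (b + 1), saddle (a + 1) (b + 1)}

theorem coplanar_saddleParallelogram (a b : ℤ) : Coplanar ℝ (saddleParallelogram a b) := by
  have hmem : saddle (a + 1) (b + 1) ∈
      affineSpan ℝ {saddle a b, saddle (a + 1) b, saddle a (b + 1)} := by
    simp [saddle_mem_affineSpan_iff]
  have hset : saddleParallelogram a b =
      insert (saddle (a + 1) (b + 1)) {saddle a b, saddle (a + 1) b, saddle a (b + 1)} := by
    simp only [saddleParallelogram, Set.insert_comm _ (saddle (a + 1) (b + 1)), Set.pair_comm]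
  rw [hset, coplanar_insert_iff_of_mem_affineSpan hmem]
  exact coplanar_triple ℝ _ _ _

theorem eq_of_corners_mem_affineSpan {a b a' b' : ℤ}
    (h₀ : saddle a' b' ∈ affineSpan ℝ {saddle a b, saddle (a + 1) b, saddle a (b + 1)})
    (h₁ : saddle (a' + 1) b' ∈ affineSpan ℝ {saddle a b, saddle (a + 1) b, saddle a (b + 1)})
    (h₂ : saddle a' (b' + 1) ∈ affineSpan ℝ {saddle a b, saddle (a + 1) b, saddle a (b + 1)}) :
    (a, b) = (a', b') := by
  rw [saddle_mem_affineSpan_iff] at h₀ h₁ h₂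
  have ha : 2 * (a' - a) = 0 := by linear_combination h₁ - h₀
  have hb : 2 * (b' - b) = 0 := by linear_combination h₀ - h₂
  rw [Prod.mk.injEq]
  omega

theorem not_coplanar_saddleParallelogram_union {a b a' b' : ℤ} (hne : (a, b) ≠ (a', b')) :
    ¬Coplanar ℝ (saddleParallelogram a b ∪ saddleParallelogram a' b') := by
  intro h
  have hspan : ∀ p ∈ saddleParallelogram a' b',
      p ∈ affineSpan ℝ {saddle a b, saddle (a + 1) b, saddle a (b + 1)} := fun p hp =>
    h.mem_affineSpan_of_not_collinear (by simp [saddleParallelogram])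
      (by simp [saddleParallelogram]) (by simp [saddleParallelogram]) (saddle_not_collinear a b)
      (Or.inr hp)
  exact hne <| eq_of_corners_mem_affineSpan (hspan _ (by simp [saddleParallelogram]))
    (hspan _ (by simp [saddleParallelogram])) (hspan _ (by simp [saddleParallelogram]))

/-- For every `(a,b) ∈ ℤ²` the four saddle points `p_{a,b}, p_{a+1,b},
`p_{a,b+1}, p_{a+1,b+1}` are coplanar and form a (nondegenerate)
parallelogram, and no two of these parallelograms are coplanar. -/
theorem saddle_parallelograms :
    (∀ a b : ℤ,
      saddle a b + saddle (a + 1) (b + 1) = saddle (a + 1) b + saddle a (b + 1) ∧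
      ¬ Collinear ℝ ({saddle a b, saddle (a + 1) b, saddle a (b + 1)} :
        Set (EuclideanSpace ℝ (Fin 3))) ∧
      Coplanar ℝ ({saddle a b, saddle (a + 1) b, saddle a (b + 1),
        saddle (a + 1) (b + 1)} : Set (EuclideanSpace ℝ (Fin 3)))) ∧
    (∀ a b a' b' : ℤ, (a, b) ≠ (a', b') →
      ¬ Coplanar ℝ (({saddle a b, saddle (a + 1) b, saddle a (b + 1),
          saddle (a + 1) (b + 1)} ∪
        {saddle a' b', saddle (a' + 1) b', saddle a' (b' + 1),
          saddle (a' + 1) (b' + 1)}) : Set (EuclideanSpace ℝ (Fin 3)))) :=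
  ⟨fun a b => ⟨saddle_add_saddle a b (a + 1) (b + 1), saddle_not_collinear a b,
      coplanar_saddleParallelogram a b⟩,
    fun _ _ _ _ hne => not_coplanar_saddleParallelogram_union hne⟩
end
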